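/- Let ℒ(λ) = L₁(λ, w_*(λ)) with w_*(λ) = argmin_w L₂(λ,w), and Γ^α(λ) = min_w max_u [L₁(λ,w) + α(L₂(λ,w) − L₂(λ,u))]. Under the smoothness and strong convexity assumptions, for α > 2ℓ₁₁/μ₂ one has |ℒ(λ) − Γ^α(λ)| ≤ C/α for a constant C depending only on ℓ₁₀, ℓ₁₁, ℓ₂₁, ℓ₂₂, μ₂. -/
import Mathlib


open Set

/-- With `ℒ(λ) = L₁(λ, w_*(λ))`, `w_*(λ) = argmin_w L₂(λ,w)`, and
`Γ^α(λ) = min_w max_u [L₁(λ,w) + α(L₂(λ,w) − L₂(λ,u))]`, under the smoothness and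
strong-convexity assumptions there is a constant `C ≥ 0` (depending only on
`ℓ₁₀, ℓ₁₁, ℓ₂₁, ℓ₂₂, μ₂`) such that `|ℒ(λ) − Γ^α(λ)| ≤ C/α` for all `α > 2ℓ₁₁/μ₂`. -/
theorem value_gap_bilevel_minimax
    {Λ : Type*} {E : Type*} [NormedAddCommGroup E] [InnerProductSpace ℝ E]
    [CompleteSpace E]
    (L₁ L₂ : Λ → E → ℝ) (g₁ g₂ : Λ → E → E) (H₂ : Λ → E → (E →L[ℝ] E))
    (wst : Λ → E) (μ₂ ℓ₁₀ ℓ₁₁ ℓ₂₁ ℓ₂₂ : ℝ)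
    (hμ₂ : 0 < μ₂) (hℓ₁₀ : 0 ≤ ℓ₁₀)
    (hL₁lip : ∀ (lam : Λ) (w w' : E), |L₁ lam w - L₁ lam w'| ≤ ℓ₁₀ * ‖w - w'‖)
    (hgrad₁ : ∀ (lam : Λ) (w : E), HasGradientAt (L₁ lam) (g₁ lam w) w)
    (hgrad₁lip : ∀ (lam : Λ) (w w' : E), ‖g₁ lam w - g₁ lam w'‖ ≤ ℓ₁₁ * ‖w - w'‖)
    (hgrad₂ : ∀ (lam : Λ) (w : E), HasGradientAt (L₂ lam) (g₂ lam w) w)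
    (hgrad₂lip : ∀ (lam : Λ) (w w' : E), ‖g₂ lam w - g₂ lam w'‖ ≤ ℓ₂₁ * ‖w - w'‖)
    (hHess : ∀ (lam : Λ) (w : E), HasFDerivAt (g₂ lam) (H₂ lam w) w)
    (hHesslip : ∀ (lam : Λ) (w w' : E), ‖H₂ lam w - H₂ lam w'‖ ≤ ℓ₂₂ * ‖w - w'‖)
    (hL₂sc : ∀ lam : Λ, ConvexOn ℝ univ (fun w => L₂ lam w - μ₂ / 2 * ‖w‖ ^ 2))
    (hwst : ∀ lam : Λ, IsMinOn (L₂ lam) univ (wst lam)) :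
    ∃ C : ℝ, 0 ≤ C ∧ ∀ α : ℝ, 2 * ℓ₁₁ / μ₂ < α → ∀ lam : Λ,
      |L₁ lam (wst lam) -
        (⨅ w : E, ⨆ u : E, (L₁ lam w + α * (L₂ lam w - L₂ lam u)))| ≤ C / α := by
  rcases subsingleton_or_nontrivial E with hE | hE
  · -- Trivial space: the minimax value equals `L₁ lam (wst lam)` exactly.
    refine ⟨0, le_refl 0, fun α hα lam => ?_⟩
    have hval : (⨅ w : E, ⨆ u : E, (L₁ lam w + α * (L₂ lam w - L₂ lam u)))
        = L₁ lam (wst lam) := by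
      have h1 : ∀ w : E, (⨆ u : E, (L₁ lam w + α * (L₂ lam w - L₂ lam u))) = L₁ lam w := by
        intro w
        have h2 : ∀ u : E, L₁ lam w + α * (L₂ lam w - L₂ lam u) = L₁ lam w := by
          intro u; rw [Subsingleton.elim u w]; ring
        simp only [h2]
        exact ciSup_const
      rw [iInf_congr h1]
      have h3 : ∀ w : E, L₁ lam w = L₁ lam (wst lam) := fun w => by
        rw [Subsingleton.elim w (wst lam)]
      simp only [h3]
      exact ciInf_const
    rw [hval, sub_self, abs_zero, zero_div]
  rcases isEmpty_or_nonempty Λ with hΛ | hΛ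
  · exact ⟨0, le_refl 0, fun α hα lam => isEmptyElim lam⟩
  -- Main case.
  -- First, `ℓ₁₁ ≥ 0` since `E` is nontrivial and `Λ` is nonempty.
  obtain ⟨lam0⟩ := hΛ
  obtain ⟨x, y, hxy⟩ := exists_pair_ne E
  have hℓ₁₁ : 0 ≤ ℓ₁₁ := by
    have hpos : 0 < ‖x - y‖ := by
      rw [norm_pos_iff, sub_ne_zero]; exact hxy
    have h0 : (0 : ℝ) * ‖x - y‖ ≤ ℓ₁₁ * ‖x - y‖ := by
      rw [zero_mul]; exact le_trans (norm_nonneg _) (hgrad₁lip lam0 x y)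
    exact le_of_mul_le_mul_right h0 hpos
  -- Quadratic growth from strong convexity at the minimizer.
  have key : ∀ (lam : Λ) (w : E),
      L₂ lam (wst lam) + μ₂ / 2 * ‖w - wst lam‖ ^ 2 ≤ L₂ lam w := by
    intro lam w
    have hsc : StrongConvexOn univ μ₂ (L₂ lam) :=
      strongConvexOn_iff_convex.mpr (hL₂sc lam)
    set d := ‖w - wst lam‖ with hd
    set K := μ₂ / 2 * d ^ 2 with hK
    set M := L₂ lam w - L₂ lam (wst lam) with hM
    have hMnn : 0 ≤ M := by
      have h := isMinOn_iff.mp (hwst lam) w (mem_univ w)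
      rw [hM]; linarith
    have hstep : ∀ t : ℝ, 0 < t → t < 1 → (1 - t) * K ≤ M := by
      intro t ht0 ht1
      have hcx := hsc.2 (mem_univ w) (mem_univ (wst lam)) ht0.le
        (by linarith : (0:ℝ) ≤ 1 - t) (by ring)
      have hmin := isMinOn_iff.mp (hwst lam) (t • w + (1 - t) • wst lam)
        (mem_univ _)
      simp only [smul_eq_mul] at hcx
      have hcx' : L₂ lam (wst lam) ≤ t * L₂ lam w + (1 - t) * L₂ lam (wst lam)
          - t * (1 - t) * K := le_trans hmin hcx
      nlinarith [mul_pos ht0 (sub_pos.mpr ht1)]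
    by_contra hcon
    push_neg at hcon
    have hKM : M < K := by rw [hM, hK]; linarith
    have hKpos : 0 < K := lt_of_le_of_lt hMnn hKM
    have := hstep ((K - M) / (2 * K)) (div_pos (by linarith) (by linarith))
      (by rw [div_lt_one (by positivity)]; linarith)
    have h2 : (1 - (K - M) / (2 * K)) * K = (K + M) / 2 := by
      field_simp; ring
    rw [h2] at this
    linarith
  refine ⟨ℓ₁₀ ^ 2 / (2 * μ₂), by positivity, fun α hα lam => ?_⟩
  have hα0 : 0 < α := lt_of_le_of_lt (by positivity) hα
  set W := wst lam with hW
  -- The inner supremum is attained at `u = wst lam`.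
  have hsup : ∀ w : E, (⨆ u : E, (L₁ lam w + α * (L₂ lam w - L₂ lam u)))
      = L₁ lam w + α * (L₂ lam w - L₂ lam W) := by
    intro w
    refine IsLUB.ciSup_eq ?_
    constructor
    · rintro v ⟨u, rfl⟩
      show L₁ lam w + α * (L₂ lam w - L₂ lam u)
        ≤ L₁ lam w + α * (L₂ lam w - L₂ lam W)
      rw [hW]
      have := isMinOn_iff.mp (hwst lam) u (mem_univ u)
      nlinarith [mul_le_mul_of_nonneg_left (sub_nonneg.mpr this) hα0.le]
    · intro b hb
      exact hb ⟨W, rfl⟩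
  rw [iInf_congr hsup]
  set φ : E → ℝ := fun w => L₁ lam w + α * (L₂ lam w - L₂ lam W) with hφ
  set C : ℝ := ℓ₁₀ ^ 2 / (2 * μ₂) with hC
  have hq : C / α * (2 * μ₂ * α) = ℓ₁₀ ^ 2 := by
    rw [hC]; field_simp
  -- Lower bound on φ.
  have hlow : ∀ w : E, L₁ lam W - C / α ≤ φ w := by
    intro w
    have h1 : L₁ lam W - L₁ lam w ≤ ℓ₁₀ * ‖w - W‖ := by
      have h := hL₁lip lam W w
      rw [abs_le] at h
      have h2 := h.2
      rw [norm_sub_rev] at h2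
      linarith
    have h2 : μ₂ / 2 * ‖w - W‖ ^ 2 ≤ L₂ lam w - L₂ lam W := by
      have := key lam w; linarith
    have h3 : α * (μ₂ / 2 * ‖w - W‖ ^ 2) ≤ α * (L₂ lam w - L₂ lam W) :=
      mul_le_mul_of_nonneg_left h2 hα0.le
    have hd : 0 ≤ ‖w - W‖ := norm_nonneg _
    simp only [hφ]
    nlinarith [sq_nonneg (α * μ₂ * ‖w - W‖ - ℓ₁₀), mul_pos hα0 hμ₂]
  have hbdd : BddBelow (range φ) := by
    refine ⟨L₁ lam W - C / α, ?_⟩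
    rintro v ⟨w, rfl⟩
    exact hlow w
  have hub : (⨅ w : E, φ w) ≤ L₁ lam W := by
    have := ciInf_le hbdd W
    simp only [hφ] at this ⊢
    simpa using this
  have hlb : L₁ lam W - C / α ≤ ⨅ w : E, φ w := le_ciInf hlow
  have hCα : 0 ≤ C / α := by positivity
  rw [abs_le]
  constructor <;> linarith
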